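/- arXiv:2411.15109 — 2 statements merged into one kernel-verified Lean document; each statement's English description precedes it below -/
import Mathlib

section
/- Let H be a hypothesis class of the form H = {the all-zero function} ∪ H₁ ∪ H₂ ∪ H₃ ∪ …, where the sets of natural numbers on which functions of distinct Hᵢ take value 1 lie in pairwise disjoint blocks Bᵢ ⊆ ℕ, every function in Hᵢ takes value 1 somewhere in Bᵢ and value 0 outside Bᵢ, and each Hᵢ has at most 2 elements. Then H admits an online learner making at most 2 mistakes on every H-realizable sample; consequently ldim(H) ≤ 2. -/
/-- A sample: a finite sequence of (point, label) pairs. -/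
abbrev Sample := List (ℕ × Bool)

/-- A sample is consistent with `f` if `f` agrees with every labeled pair. -/
def Consistent (f : ℕ → Bool) (S : Sample) : Prop := ∀ p ∈ S, f p.1 = p.2

/-- A sample is realizable by `H` if some function in `H` is consistent with it. -/
def Realizable (H : Set (ℕ → Bool)) (S : Sample) : Prop := ∃ f ∈ H, Consistent f S

/-- A (total) learner maps a sample and a query point to a prediction. -/
abbrev Learner := Sample → ℕ → Bool

/-- Number of sequential prediction mistakes of learner `L` on sample `S`. -/
def mistakes (L : Learner) (S : Sample) : ℕ :=
  (List.range S.length).countP fun i =>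
    decide (L (S.take i) (S.getD i (0, false)).1 ≠ (S.getD i (0, false)).2)

/-- Code of a Littlestone tree: association list assigning labels to nodes
(nodes are indexed by the bit-path leading to them; missing nodes get label 0). -/
abbrev TreeCode := List (List Bool × ℕ)

/-- Label of the node reached by path `p` in the tree coded by `T`. -/
def nodeLabel (T : TreeCode) (p : List Bool) : ℕ := (T.lookup p).getD 0

/-- The sample written along the branch `p` (a list of edge bits) in the tree `T`. -/
def branchSample (T : TreeCode) (p : List Bool) : Sample :=
  (List.range p.length).map fun i => (nodeLabel T (p.take i), p.getD i false)

/-- `H` has Littlestone dimension at most `d`: every Littlestone tree of depth `d+1`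
has a leaf whose branch sample is not `H`-realizable. -/
def LdimLe (H : Set (ℕ → Bool)) (d : ℕ) : Prop :=
  ∀ T : TreeCode, ∃ p : List Bool, p.length = d + 1 ∧ ¬ Realizable H (branchSample T p)

/-- The Littlestone dimension of `H` (`⊤` if infinite). -/
noncomputable def Ldim (H : Set (ℕ → Bool)) : ℕ∞ :=
  sInf ((↑) '' {d : ℕ | LdimLe H d})

/-- `H` has effective Littlestone dimension at most `d`: a total computable function
indicates, in every depth-`(d+1)` Littlestone tree, a leaf that is not `H`-realizable. -/
def EldimLe (H : Set (ℕ → Bool)) (d : ℕ) : Prop :=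
  ∃ A : TreeCode → List Bool, Computable A ∧
    ∀ T, (A T).length = d + 1 ∧ ¬ Realizable H (branchSample T (A T))

/-- The effective Littlestone dimension of `H` (`⊤` if infinite). -/
noncomputable def Eldim (H : Set (ℕ → Bool)) : ℕ∞ :=
  sInf ((↑) '' {d : ℕ | EldimLe H d})

/-- The cylinder induced by a sample: all functions consistent with it. -/
def Cyl (S : Sample) : Set (ℕ → Bool) := {f | Consistent f S}

/-- Effectively open subset of Cantor space: union of a computably enumerated
family of cylinders. -/
def EffOpen (X : Set (ℕ → Bool)) : Prop :=
  ∃ g : ℕ → Sample, Computable g ∧ X = ⋃ n, Cyl (g n)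

/-- Effectively closed subset of Cantor space: complement is effectively open. -/
def EffClosed (X : Set (ℕ → Bool)) : Prop := EffOpen Xᶜ

/-!
Predict `0` until the all-zero function is refuted by a positive label at some point `x`, and
from then on follow any hypothesis consistent with the sample so far. A hypothesis that is `1`
at `x` lives in the unique block containing `x`, so at most two hypotheses survive the refutation
of `0`. That refutation costs one mistake, and every later mistake discards the hypothesis being
followed but never the target, so at most one further mistake occurs. For the Littlestone
dimension, a learner with mistake bound `d` leaves no depth-`d + 1` tree shattered: the branch
that contradicts each of its predictions forces a mistake at every node.
-/

theorem consistent_append_singleton {f : ℕ → Bool} {S : Sample} {p : ℕ × Bool} :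
    Consistent f (S ++ [p]) ↔ Consistent f S ∧ f p.1 = p.2 := by
  simp [Consistent, or_imp, forall_and]

theorem mistakes_append_singleton (L : Learner) (S : Sample) (p : ℕ × Bool) :
    mistakes L (S ++ [p]) = mistakes L S + if L S p.1 = p.2 then 0 else 1 := by
  have prefix_eq : ∀ i < S.length, (S ++ [p]).take i = S.take i ∧
      (S ++ [p]).getD i (0, false) = S.getD i (0, false) := fun i hi => by
    simp [List.take_append_of_le_length hi.le, List.getD_eq_getElem?_getD,
      List.getElem?_append_left hi]
  unfold mistakes
  rw [List.length_append, List.length_singleton, List.range_succ, List.countP_append,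
    List.countP_congr fun i hi => by rw [(prefix_eq i (List.mem_range.1 hi)).1,
      (prefix_eq i (List.mem_range.1 hi)).2]]
  simp [List.getD_eq_getElem?_getD]

theorem branchSample_append_singleton (T : TreeCode) (p : List Bool) (b : Bool) :
    branchSample T (p ++ [b]) = branchSample T p ++ [(nodeLabel T p, b)] := by
  unfold branchSample
  rw [List.length_append, List.length_singleton, List.range_succ, List.map_append]
  congr 1
  · refine List.map_congr_left fun i hi => ?_
    have hi : i < p.length := List.mem_range.1 hi
    simp [List.take_append_of_le_length hi.le, List.getD_eq_getElem?_getD,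
      List.getElem?_append_left hi]
  · simp [List.getD_eq_getElem?_getD]

def adversarialBranch (L : Learner) (T : TreeCode) : ℕ → List Bool
  | 0 => []
  | n + 1 =>
    let p := adversarialBranch L T n
    p ++ [!L (branchSample T p) (nodeLabel T p)]

theorem length_adversarialBranch (L : Learner) (T : TreeCode) (n : ℕ) :
    (adversarialBranch L T n).length = n := by
  induction n with
  | zero => rfl
  | succ n ih => simp [adversarialBranch, ih]

theorem mistakes_adversarialBranch (L : Learner) (T : TreeCode) (n : ℕ) :
    mistakes L (branchSample T (adversarialBranch L T n)) = n := by
  induction n with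
  | zero => rfl
  | succ n ih =>
    rw [adversarialBranch, branchSample_append_singleton, mistakes_append_singleton, ih]
    simp

theorem ldimLe_of_mistakes_le {H : Set (ℕ → Bool)} {d : ℕ} (L : Learner)
    (hL : ∀ S, Realizable H S → mistakes L S ≤ d) : LdimLe H d := fun T =>
  ⟨adversarialBranch L T (d + 1), length_adversarialBranch L T (d + 1), fun hr => by
    simpa [mistakes_adversarialBranch] using hL _ hr⟩

theorem ldim_le_of_ldimLe {H : Set (ℕ → Bool)} {d : ℕ} (h : LdimLe H d) : Ldim H ≤ d :=
  sInf_le ⟨d, h, rfl⟩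

section ZeroFirstLearner

variable {H : Set (ℕ → Bool)} {k : ℕ}

open Classical in
noncomputable def zeroFirstLearner (H : Set (ℕ → Bool)) : Learner := fun S x =>
  if Consistent (fun _ => false) S then false
  else if h : Realizable H S then h.choose x else false

theorem zeroFirstLearner_of_consistent_zero {S : Sample}
    (hz : Consistent (fun _ => false) S) (x : ℕ) : zeroFirstLearner H S x = false := by
  simp [zeroFirstLearner, hz]

theorem exists_zeroFirstLearner_eq {S : Sample} (hz : ¬ Consistent (fun _ => false) S)
    (hr : Realizable H S) : ∃ h ∈ H ∩ Cyl S, zeroFirstLearner H S = h :=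
  ⟨hr.choose, hr.choose_spec, funext fun x => by simp [zeroFirstLearner, hz, hr]⟩

theorem exists_inter_cyl_subset {S : Sample} (hz : ¬ Consistent (fun _ => false) S) :
    ∃ x, H ∩ Cyl S ⊆ {f ∈ H | f x = true} := by
  obtain ⟨p, hpS, hp⟩ : ∃ p ∈ S, p.2 = true := by
    simpa [Consistent, eq_comm (a := false)] using hz
  exact ⟨p.1, fun f ⟨hfH, hfS⟩ => ⟨hfH, (hfS p hpS).trans hp⟩⟩

open Classical in
noncomputable def mistakePotential (H : Set (ℕ → Bool)) (k : ℕ) (S : Sample) : ℕ :=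
  if Consistent (fun _ => false) S then k else (H ∩ Cyl S).ncard - 1

theorem finite_inter_cyl_and_ncard_le (hk : ∀ x, {f ∈ H | f x = true}.encard ≤ k)
    {S : Sample} (hz : ¬ Consistent (fun _ => false) S) :
    (H ∩ Cyl S).Finite ∧ (H ∩ Cyl S).ncard ≤ k := by
  obtain ⟨x, hx⟩ := exists_inter_cyl_subset (H := H) hz
  exact Set.encard_le_coe_iff_finite_ncard_le.1 ((Set.encard_le_encard hx).trans (hk x))

theorem cyl_append_singleton_subset (S : Sample) (p : ℕ × Bool) : Cyl (S ++ [p]) ⊆ Cyl S :=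
  fun _ hf => (consistent_append_singleton.1 hf).1

theorem mistake_add_mistakePotential_append_singleton_le
    (hk : ∀ x, {f ∈ H | f x = true}.encard ≤ k) {f₀ : ℕ → Bool} (hf₀ : f₀ ∈ H) {S : Sample}
    {p : ℕ × Bool} (hSp : Consistent f₀ (S ++ [p])) :
    (if zeroFirstLearner H S p.1 = p.2 then 0 else 1) + mistakePotential H k (S ++ [p]) ≤
      mistakePotential H k S := by
  obtain ⟨hS, -⟩ := consistent_append_singleton.1 hSp
  by_cases hz' : Consistent (fun _ => false) (S ++ [p])
  · obtain ⟨hz, hp₀⟩ := consistent_append_singleton.1 hz'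
    simp [mistakePotential, hz, hz', zeroFirstLearner_of_consistent_zero, ← hp₀]
  obtain ⟨hfin', hle'⟩ := finite_inter_cyl_and_ncard_le hk hz'
  have hpos : 0 < (H ∩ Cyl (S ++ [p])).ncard := (Set.ncard_pos hfin').2 ⟨f₀, hf₀, hSp⟩
  by_cases hz : Consistent (fun _ => false) S
  · simp only [mistakePotential, hz, hz', zeroFirstLearner_of_consistent_zero, ↓reduceIte]
    split <;> omega
  obtain ⟨hfin, -⟩ := finite_inter_cyl_and_ncard_le hk hz
  obtain ⟨h, hh, hL⟩ := exists_zeroFirstLearner_eq hz ⟨f₀, hf₀, hS⟩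
  have hsub : H ∩ Cyl (S ++ [p]) ⊆ H ∩ Cyl S :=
    Set.inter_subset_inter_right H (cyl_append_singleton_subset S p)
  simp only [mistakePotential, hz, hz', hL, ↓reduceIte]
  by_cases hcorrect : h p.1 = p.2
  · have := Set.ncard_le_ncard hsub hfin
    simp only [hcorrect, ↓reduceIte]
    omega
  · -- a mistake discards the followed hypothesis `h`, while `f₀` survives
    have hssub : H ∩ Cyl (S ++ [p]) ⊂ H ∩ Cyl S :=
      (Set.ssubset_iff_of_subset hsub).2
        ⟨h, hh, fun h' => hcorrect (consistent_append_singleton.1 h'.2).2⟩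
    have := Set.ncard_lt_ncard hssub hfin
    simp only [hcorrect, ↓reduceIte]
    omega

theorem mistakes_add_mistakePotential_le (hk : ∀ x, {f ∈ H | f x = true}.encard ≤ k)
    {f₀ : ℕ → Bool} (hf₀ : f₀ ∈ H) {S : Sample} (hS : Consistent f₀ S) :
    mistakes (zeroFirstLearner H) S + mistakePotential H k S ≤ k := by
  induction S using List.reverseRecOn with
  | nil => simp [mistakes, mistakePotential, Consistent]
  | append_singleton S p ih =>
    have hstep := mistake_add_mistakePotential_append_singleton_le hk hf₀ hS
    have hprev := ih (consistent_append_singleton.1 hS).1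
    rw [mistakes_append_singleton]
    omega

theorem mistakes_zeroFirstLearner_le (hk : ∀ x, {f ∈ H | f x = true}.encard ≤ k)
    {S : Sample} (hS : Realizable H S) : mistakes (zeroFirstLearner H) S ≤ k := by
  obtain ⟨f₀, hf₀, hf₀S⟩ := hS
  have := mistakes_add_mistakePotential_le hk hf₀ hf₀S
  omega

end ZeroFirstLearner

theorem Set.encard_pair_le {α : Type*} (a b : α) : ({a, b} : Set α).encard ≤ 2 := by
  refine (Set.encard_insert_le _ _).trans ?_
  rw [Set.encard_singleton]
  norm_num

theorem encard_positive_le_two_of_blocks {Hs : ℕ → Set (ℕ → Bool)} {B : ℕ → Set ℕ}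
    (hdisj : Pairwise (Function.onFun Disjoint B))
    (hsupp : ∀ i, ∀ f ∈ Hs i, ∀ x ∉ B i, f x = false)
    (hcard : ∀ i, ∃ f g : ℕ → Bool, Hs i ⊆ {f, g}) (x : ℕ) :
    {f ∈ {fun _ => false} ∪ ⋃ i, Hs i | f x = true}.encard ≤ 2 := by
  have hblock : ∀ f ∈ {fun _ => false} ∪ ⋃ i, Hs i, f x = true → ∃ i, f ∈ Hs i ∧ x ∈ B i := by
    rintro f (rfl | hf) hfx
    · cases hfx
    obtain ⟨i, hfi⟩ := Set.mem_iUnion.1 hf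
    exact ⟨i, hfi, by_contra fun hxi => by simp [hsupp i f hfi x hxi] at hfx⟩
  rcases Set.eq_empty_or_nonempty {f ∈ {fun _ => false} ∪ ⋃ i, Hs i | f x = true} with
    hempty | ⟨f₀, hf₀H, hf₀x⟩
  · simp only [hempty, Set.encard_empty, zero_le]
  obtain ⟨i, -, hxi⟩ := hblock f₀ hf₀H hf₀x
  obtain ⟨a, b, hab⟩ := hcard i
  refine (Set.encard_le_encard fun f hf => hab ?_).trans (Set.encard_pair_le a b)
  obtain ⟨j, hfj, hxj⟩ := hblock f hf.1 hf.2
  rwa [hdisj.eq (Set.not_disjoint_iff.2 ⟨x, hxj, hxi⟩)] at hfj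

theorem stmt5 (Hs : ℕ → Set (ℕ → Bool)) (B : ℕ → Set ℕ)
    (hdisj : Pairwise (Function.onFun Disjoint B))
    (hsupp : ∀ i, ∀ f ∈ Hs i, (∃ x ∈ B i, f x = true) ∧ ∀ x ∉ B i, f x = false)
    (hcard : ∀ i, ∃ f g : ℕ → Bool, Hs i ⊆ {f, g}) :
    (∃ L : Learner, ∀ S : Sample,
        Realizable ({fun _ => false} ∪ ⋃ i, Hs i) S → mistakes L S ≤ 2) ∧
      Ldim ({fun _ => false} ∪ ⋃ i, Hs i) ≤ 2 := by
  have hk := encard_positive_le_two_of_blocks hdisj (fun i f hf => (hsupp i f hf).2) hcard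
  have hL := fun S => mistakes_zeroFirstLearner_le (S := S) hk
  exact ⟨⟨_, hL⟩, ldim_le_of_ldimLe (ldimLe_of_mistakes_le _ hL)⟩
end

section
/- Let H be a hypothesis class of finite positive effective Littlestone dimension d, and let x ∈ ℕ. Then at least one of the classes H⁰ₓ = {f ∈ H : f(x) = 0} and H¹ₓ = {f ∈ H : f(x) = 1} has effective Littlestone dimension at most d − 1. -/
def joinTrees (x : ℕ) (T₀ T₁ : TreeCode) : TreeCode :=
  ([], x) :: (T₀.map (fun e => (false :: e.1, e.2)) ++ T₁.map (fun e => (true :: e.1, e.2)))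

theorem List.lookup_map_cons {α β : Type*} [DecidableEq α] (a b : α) (l : List (List α × β))
    (p : List α) :
    (l.map fun e => (a :: e.1, e.2)).lookup (b :: p) = if b = a then l.lookup p else none := by
  induction l with
  | nil => simp
  | cons e l ih => grind

theorem nodeLabel_joinTrees_cons (x : ℕ) (T₀ T₁ : TreeCode) (b : Bool) (p : List Bool) :
    nodeLabel (joinTrees x T₀ T₁) (b :: p) = nodeLabel (bif b then T₁ else T₀) p := by
  cases b <;>
    simp [nodeLabel, joinTrees, List.lookup_cons, List.lookup_append, List.lookup_map_cons]

theorem branchSample_joinTrees_cons (x : ℕ) (T₀ T₁ : TreeCode) (b : Bool) (p : List Bool) :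
    branchSample (joinTrees x T₀ T₁) (b :: p) =
      (x, b) :: branchSample (bif b then T₁ else T₀) p := by
  simp only [branchSample, List.length_cons, List.range_succ_eq_map, List.map_cons, List.map_map]
  congr 1
  refine List.map_congr_left fun i _ => ?_
  simp [nodeLabel_joinTrees_cons]

theorem primrec_joinTrees (x : ℕ) : Primrec₂ (joinTrees x) := by
  have hmap (b : Bool) : Primrec fun T : TreeCode => T.map fun e => (b :: e.1, e.2) :=
    Primrec.list_map Primrec.id
      ((Primrec.list_cons.comp (Primrec.const b) (Primrec.fst.comp Primrec.snd)).pair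
        (Primrec.snd.comp Primrec.snd))
  exact Primrec.list_cons.comp (Primrec.const ([], x))
    (Primrec.list_append.comp ((hmap false).comp Primrec.fst) ((hmap true).comp Primrec.snd))

theorem realizable_cons_iff (H : Set (ℕ → Bool)) (x : ℕ) (b : Bool) (S : Sample) :
    Realizable H ((x, b) :: S) ↔ Realizable {f ∈ H | f x = b} S := by
  simp [Realizable, Consistent, and_assoc]

theorem eldim_le_of_eldimLe {H : Set (ℕ → Bool)} {d : ℕ} (h : EldimLe H d) : Eldim H ≤ d :=
  sInf_le ⟨d, h, rfl⟩

theorem eldimLe_of_eldim_eq {H : Set (ℕ → Bool)} {d : ℕ} (hd : Eldim H = d) : EldimLe H d := by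
  have hne : ((↑) '' {k : ℕ | EldimLe H k} : Set ℕ∞).Nonempty := by
    by_contra h
    rw [Set.not_nonempty_iff_eq_empty] at h
    simp [Eldim, h] at hd
  obtain ⟨k, hk, hkd⟩ := csInf_mem hne
  rw [← Eldim, hd, Nat.cast_inj] at hkd
  exact hkd ▸ hk

def decodeTree (n : ℕ) : TreeCode := (Encodable.decode n).getD []

theorem decodeTree_encode (T : TreeCode) : decodeTree (Encodable.encode T) = T := by
  simp [decodeTree]

theorem primrec_decodeTree : Primrec decodeTree :=
  Primrec.option_getD.comp Primrec.decode (Primrec.const [])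

theorem not_realizable_tail_of_joinTrees {H : Set (ℕ → Bool)} {x : ℕ} {T₀ T₁ : TreeCode}
    {p : List Bool} (hp : p ≠ []) (h : ¬ Realizable H (branchSample (joinTrees x T₀ T₁) p)) :
    ¬ Realizable {f ∈ H | f x = p.headI} (branchSample (bif p.headI then T₁ else T₀) p.tail) := by
  obtain ⟨b, t, rfl⟩ := List.exists_cons_of_ne_nil hp
  rwa [branchSample_joinTrees_cons, realizable_cons_iff] at h

theorem EldimLe.split {H : Set (ℕ → Bool)} {k : ℕ} (h : EldimLe H (k + 1)) (x : ℕ) :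
    EldimLe {f ∈ H | f x = false} k ∨ EldimLe {f ∈ H | f x = true} k := by
  obtain ⟨A, hA, hspec⟩ := h
  have hlen (T₀ T₁ : TreeCode) : (A (joinTrees x T₀ T₁)).tail.length = k + 1 := by
    simp [(hspec _).1]
  have hwit (T₀ T₁ : TreeCode) := not_realizable_tail_of_joinTrees
    (List.ne_nil_of_length_eq_add_one (hspec (joinTrees x T₀ T₁)).1) (hspec _).2
  have hcomp : Computable₂ fun T₀ T₁ => A (joinTrees x T₀ T₁) :=
    hA.comp (primrec_joinTrees x).to_comp
  by_cases hsearch : ∀ T₀, ∃ n, (A (joinTrees x T₀ (decodeTree n))).headI = false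
  · left
    have hfind : Computable fun T₀ => Nat.find (hsearch T₀) := by
      refine Computable.find (Computable.computablePred ?_) hsearch
      exact ((Primrec.not.comp Primrec.list_headI).to_comp.comp
        (hcomp.comp Computable.fst (primrec_decodeTree.to_comp.comp Computable.snd))).of_eq
        fun _ => by simp
    refine ⟨fun T₀ => (A (joinTrees x T₀ (decodeTree (Nat.find (hsearch T₀))))).tail,
      Primrec.list_tail.to_comp.comp
        (hcomp.comp Computable.id (primrec_decodeTree.to_comp.comp hfind)),
      fun T₀ => ⟨hlen _ _, ?_⟩⟩
    simpa [Nat.find_spec (hsearch T₀)] using hwit T₀ (decodeTree (Nat.find (hsearch T₀)))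
  · right
    push Not at hsearch
    obtain ⟨T₀, hT₀⟩ := hsearch
    refine ⟨fun T₁ => (A (joinTrees x T₀ T₁)).tail,
      Primrec.list_tail.to_comp.comp (hcomp.comp (Computable.const T₀) Computable.id),
      fun T₁ => ⟨hlen _ _, ?_⟩⟩
    have hhead : (A (joinTrees x T₀ T₁)).headI = true := by
      simpa [decodeTree_encode] using hT₀ (Encodable.encode T₁)
    simpa [hhead] using hwit T₀ T₁

theorem stmt11 (H : Set (ℕ → Bool)) (d : ℕ) (hpos : 0 < d) (hd : Eldim H = (d : ℕ∞)) (x : ℕ) :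
    Eldim {f ∈ H | f x = false} ≤ ((d - 1 : ℕ) : ℕ∞) ∨
      Eldim {f ∈ H | f x = true} ≤ ((d - 1 : ℕ) : ℕ∞) := by
  obtain ⟨k, rfl⟩ : ∃ k, d = k + 1 := ⟨d - 1, by omega⟩
  exact ((eldimLe_of_eldim_eq hd).split x).imp eldim_le_of_eldimLe eldim_le_of_eldimLe
end
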